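/- For every m ∈ ℕ, τ_3(2^m + m) ≥ m·2^{m−1}: there is an almost 3-Gallai colouring of E(K_n) with n = 2^m + m using three colours {red, blue, green} containing exactly m·2^{m−1} rainbow triangles. Namely, partition the vertices into L = {0,1}^m and R = [m]; colour the edge between u ∈ L and i ∈ R blue if u_i = 1 and red otherwise; colour the edge between u, v ∈ L green if their Hamming distance is 1; and colour all remaining edges red. -/

import Mathlib

/-- A set `S` of vertices of `K_n` is a rainbow `t`-clique for the edge colouring `c`
if it has `t` vertices and the colours of its edges are pairwise distinct. -/
def IsRainbowClique {n : ℕ} (t : ℕ) (c : Sym2 (Fin n) → ℕ) (S : Finset (Fin n)) : Prop :=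
  S.card = t ∧
    ∀ a ∈ S, ∀ b ∈ S, ∀ x ∈ S, ∀ y ∈ S,
      a ≠ b → x ≠ y → s(a, b) ≠ s(x, y) → c s(a, b) ≠ c s(x, y)

/-- A colouring of `E(K_n)` is almost `t`-Gallai if no two (distinct) rainbow `t`-cliques
share an edge. -/
def AlmostGallai {n : ℕ} (t : ℕ) (c : Sym2 (Fin n) → ℕ) : Prop :=
  ∀ S T : Finset (Fin n), IsRainbowClique t c S → IsRainbowClique t c T → S ≠ T →
    ∀ a b : Fin n, a ≠ b → a ∈ S → b ∈ S → a ∈ T → b ∈ T → False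

/-- The number of rainbow `t`-cliques of the colouring `c` of `E(K_n)`. -/
noncomputable def rainbowCount {n : ℕ} (t : ℕ) (c : Sym2 (Fin n) → ℕ) : ℕ :=
  {S : Finset (Fin n) | IsRainbowClique t c S}.ncard


/-- `tau t n` : the maximum number of rainbow `t`-cliques over all almost `t`-Gallai
colourings of `E(K_n)`. -/
noncomputable def tau (t n : ℕ) : ℕ :=
  sSup {k | ∃ c : Sym2 (Fin n) → ℕ, AlmostGallai t c ∧ rainbowCount t c = k}

/-! Write the vertex set as `L ⊕ R` with `L = {0,1}^m` and `R = [m]`. Only three colours occur, so a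
rainbow triangle has exactly one green edge, which lies in `L`, and one blue edge, which joins `L`
to `R`; hence it is `{u, u + eᵢ, i}` for a hypercube edge `{u, u + eᵢ}` of direction `i`. Any two
of its vertices determine the third, because a hypercube edge has a unique direction and `u + eᵢ`
is the only neighbour of `u` differing from it at `i`: this is the almost-Gallai property. The
rainbow triangles then correspond to their blue edges `{u, i}` with `uᵢ = 1`, of which there are
`m · 2^(m-1)`. -/

section RainbowTriangles

variable {n : ℕ} {c : Sym2 (Fin n) → ℕ}

theorem isRainbowClique_three_iff (a b d : Fin n) :
    IsRainbowClique 3 c {a, b, d} ↔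
      c s(a, b) ≠ c s(a, d) ∧ c s(a, b) ≠ c s(b, d) ∧ c s(a, d) ≠ c s(b, d) := by
  constructor
  · rintro ⟨hcard, hc⟩
    have hab : a ≠ b := by
      rintro rfl; have := Finset.card_le_two (a := a) (b := d); simp_all
    have had : a ≠ d := by
      rintro rfl; have := Finset.card_le_two (a := a) (b := b); simp_all [Finset.pair_comm]
    have hbd : b ≠ d := by
      rintro rfl; have := Finset.card_le_two (a := a) (b := b); simp_all
    simp only [Finset.mem_insert, Finset.mem_singleton] at hc
    refine ⟨hc _ ?_ _ ?_ _ ?_ _ ?_ hab had ?_, hc _ ?_ _ ?_ _ ?_ _ ?_ hab hbd ?_,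
      hc _ ?_ _ ?_ _ ?_ _ ?_ had hbd ?_⟩ <;> simp [*, Ne.symm]
  · rintro ⟨h₁, h₂, h₃⟩
    have hab : a ≠ b := by rintro rfl; exact h₃ rfl
    have had : a ≠ d := by rintro rfl; exact h₂ (by rw [Sym2.eq_swap])
    have hbd : b ≠ d := by rintro rfl; exact h₁ rfl
    refine ⟨Finset.card_eq_three.mpr ⟨a, b, d, hab, had, hbd, rfl⟩, ?_⟩
    simp only [Finset.mem_insert, Finset.mem_singleton]
    rintro x (rfl | rfl | rfl) y (rfl | rfl | rfl) z (rfl | rfl | rfl) w (rfl | rfl | rfl) <;>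
      simp_all [Sym2.eq_swap, eq_comm, Ne.symm]

theorem Finset.exists_eq_insert_pair_of_card_eq_three {α : Type*} [DecidableEq α]
    {S : Finset α} {a b : α} (hS : S.card = 3) (ha : a ∈ S) (hb : b ∈ S) (hab : a ≠ b) :
    ∃ x, S = {a, b, x} := by
  have hsub : {a, b} ⊆ S := Finset.insert_subset ha (Finset.singleton_subset_iff.mpr hb)
  obtain ⟨x, hx⟩ : ∃ x, S \ {a, b} = {x} := by
    rw [← Finset.card_eq_one, Finset.card_sdiff_of_subset hsub, hS, Finset.card_pair hab]
  refine ⟨x, ?_⟩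
  rw [← Finset.union_sdiff_of_subset hsub, hx]
  ext y; simp

theorem AlmostGallai.eq_of_mem {t : ℕ} (h : AlmostGallai t c) {S T : Finset (Fin n)}
    (hS : IsRainbowClique t c S) (hT : IsRainbowClique t c T) {a b : Fin n} (hab : a ≠ b)
    (haS : a ∈ S) (hbS : b ∈ S) (haT : a ∈ T) (hbT : b ∈ T) : S = T := by
  by_contra hST
  exact h S T hS hT hST a b hab haS hbS haT hbT

theorem almostGallai_three_of_apex_unique
    (h : ∀ a b x y : Fin n, a ≠ b →
      IsRainbowClique 3 c {a, b, x} → IsRainbowClique 3 c {a, b, y} → x = y) :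
    AlmostGallai 3 c := by
  intro S T hS hT hST a b hab haS hbS haT hbT
  obtain ⟨x, rfl⟩ := Finset.exists_eq_insert_pair_of_card_eq_three hS.1 haS hbS hab
  obtain ⟨y, rfl⟩ := Finset.exists_eq_insert_pair_of_card_eq_three hT.1 haT hbT hab
  exact hST (by rw [h a b x y hab hS hT])

theorem IsRainbowClique.exists_edge_of_colour {S : Finset (Fin n)} (hc : ∀ e, c e < 3)
    (hS : IsRainbowClique 3 c S) {k : ℕ} (hk : k < 3) :
    ∃ a ∈ S, ∃ b ∈ S, c s(a, b) = k := by
  obtain ⟨a, b, d, -, -, -, rfl⟩ := Finset.card_eq_three.mp hS.1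
  rw [isRainbowClique_three_iff] at hS
  have := hc s(a, b); have := hc s(a, d); have := hc s(b, d)
  obtain h | h | h : c s(a, b) = k ∨ c s(a, d) = k ∨ c s(b, d) = k := by omega
  · exact ⟨a, by simp, b, by simp, h⟩
  · exact ⟨a, by simp, d, by simp, h⟩
  · exact ⟨b, by simp, d, by simp, h⟩

theorem rainbowCount_le_tau {t : ℕ} (h : AlmostGallai t c) : rainbowCount t c ≤ tau t n := by
  refine le_csSup ⟨Nat.card (Finset (Fin n)), ?_⟩ ⟨c, h, rfl⟩
  rintro _ ⟨c', -, rfl⟩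
  exact Set.ncard_le_card _

end RainbowTriangles

section Hamming

variable {ι : Type*} [Fintype ι] {β : ι → Type*} [∀ i, DecidableEq (β i)]

theorem apply_eq_of_hammingDist_eq_one {x y : ∀ i, β i} (h : hammingDist x y = 1)
    {i j : ι} (hi : x i ≠ y i) (hj : j ≠ i) : x j = y j := by
  obtain ⟨k, hk⟩ := Finset.card_eq_one.mp h
  have hmem : ∀ l, x l ≠ y l → l = k := fun l hl => by
    simpa [hk] using (Finset.ext_iff.mp hk l).mp (by simpa using hl)
  by_contra hxy
  exact hj ((hmem j hxy).trans (hmem i hi).symm)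

theorem index_eq_of_hammingDist_eq_one {x y : ∀ i, β i} (h : hammingDist x y = 1)
    {i j : ι} (hi : x i ≠ y i) (hj : x j ≠ y j) : i = j := by
  by_contra hij
  exact hj (apply_eq_of_hammingDist_eq_one h hi (Ne.symm hij))

end Hamming

theorem hammingDist_add_single_self {ι : Type*} [Fintype ι] [DecidableEq ι]
    (u : ι → Fin 2) (i : ι) : hammingDist u (u + Pi.single i 1) = 1 := by
  rw [hammingDist, Finset.card_eq_one]
  refine ⟨i, Finset.ext fun j => ?_⟩
  rcases eq_or_ne j i with rfl | hj <;> simp [*]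

theorem eq_of_hammingDist_eq_one_of_apply_ne {ι : Type*} [Fintype ι] [DecidableEq ι]
    {u v w : ι → Fin 2} (hv : hammingDist u v = 1) (hw : hammingDist u w = 1) {i : ι}
    (hvi : u i ≠ v i) (hwi : u i ≠ w i) : v = w := by
  funext j
  rcases eq_or_ne j i with rfl | hj
  · omega
  · rw [← apply_eq_of_hammingDist_eq_one hv hvi hj, apply_eq_of_hammingDist_eq_one hw hwi hj]

theorem card_filter_apply_eq_one {ι : Type*} [Fintype ι] [DecidableEq ι] (i : ι) :
    (Finset.univ.filter fun u : ι → Fin 2 => u i = 1).card = 2 ^ (Fintype.card ι - 1) := by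
  have := Fintype.card_filter_piFinset_const_eq_of_mem Finset.univ i (Finset.mem_univ (1 : Fin 2))
  rwa [Fintype.piFinset_univ, Finset.card_univ, Fintype.card_fin] at this

namespace Hypercube

abbrev Vertex (m : ℕ) := (Fin m → Fin 2) ⊕ Fin m

variable {m : ℕ}

open Sum

/-- Colours `0, 1, 2` are red, blue, green. -/
def colour : Vertex m → Vertex m → ℕ
  | inl u, inl v => if hammingDist u v = 1 then 2 else 0
  | inl u, inr i | inr i, inl u => if u i = 1 then 1 else 0
  | inr _, inr _ => 0

theorem colour_comm (x y : Vertex m) : colour x y = colour y x := by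
  rcases x with u | i <;> rcases y with v | j <;> simp [colour, hammingDist_comm]

theorem colour_lt_three (x y : Vertex m) : colour x y < 3 := by
  rcases x with u | i <;> rcases y with v | j <;> simp only [colour] <;> (try split_ifs) <;> omega

def IsRainbow (x y z : Vertex m) : Prop :=
  colour x y ≠ colour x z ∧ colour x y ≠ colour y z ∧ colour x z ≠ colour y z

theorem IsRainbow.swap {x y z : Vertex m} (h : IsRainbow x y z) : IsRainbow y x z := by
  obtain ⟨h₁, h₂, h₃⟩ := h
  simp only [IsRainbow, colour_comm y x]
  exact ⟨h₂, h₁, h₃.symm⟩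

theorem isRainbow_inl_inl_inr {u v : Fin m → Fin 2} {i : Fin m} :
    IsRainbow (inl u) (inl v) (inr i) ↔ hammingDist u v = 1 ∧ u i ≠ v i := by
  simp only [IsRainbow, colour]
  constructor
  · intro h
    split_ifs at h <;> omega
  · rintro ⟨h, hi⟩
    simp only [h]
    split_ifs <;> omega

theorem IsRainbow.exists_inr_of_inl_inl {u v : Fin m → Fin 2} {x : Vertex m}
    (h : IsRainbow (inl u) (inl v) x) : ∃ i, x = inr i ∧ hammingDist u v = 1 ∧ u i ≠ v i := by
  rcases x with w | i
  · simp only [IsRainbow, colour] at h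
    split_ifs at h <;> omega
  · exact ⟨i, rfl, isRainbow_inl_inl_inr.mp h⟩

theorem IsRainbow.exists_inl_of_inl_inr {u : Fin m → Fin 2} {i : Fin m} {x : Vertex m}
    (h : IsRainbow (inl u) (inr i) x) : ∃ w, x = inl w ∧ hammingDist u w = 1 ∧ u i ≠ w i := by
  rcases x with w | j
  · refine ⟨w, rfl, ?_⟩
    simp only [IsRainbow, colour] at h
    split_ifs at h <;> omega
  · simp only [IsRainbow, colour] at h
    split_ifs at h <;> omega

theorem IsRainbow.not_inr_inr {i j : Fin m} {x : Vertex m} : ¬ IsRainbow (inr i) (inr j) x := by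
  rcases x with w | k <;> simp only [IsRainbow, colour] <;> (try split_ifs) <;> omega

theorem IsRainbow.apex_unique {a b x y : Vertex m} (hx : IsRainbow a b x) (hy : IsRainbow a b y) :
    x = y := by
  rcases a with u | i <;> rcases b with v | j
  · obtain ⟨i, rfl, huv, hi⟩ := hx.exists_inr_of_inl_inl
    obtain ⟨j, rfl, -, hj⟩ := hy.exists_inr_of_inl_inl
    rw [index_eq_of_hammingDist_eq_one huv hi hj]
  · obtain ⟨w, rfl, hw, hwi⟩ := hx.exists_inl_of_inl_inr
    obtain ⟨w', rfl, hw', hwi'⟩ := hy.exists_inl_of_inl_inr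
    rw [eq_of_hammingDist_eq_one_of_apply_ne hw hw' hwi hwi']
  · obtain ⟨w, rfl, hw, hwi⟩ := hx.swap.exists_inl_of_inl_inr
    obtain ⟨w', rfl, hw', hwi'⟩ := hy.swap.exists_inl_of_inl_inr
    rw [eq_of_hammingDist_eq_one_of_apply_ne hw hw' hwi hwi']
  · exact absurd hx IsRainbow.not_inr_inr

theorem exists_of_colour_eq_one {x y : Vertex m} (h : colour x y = 1) :
    ∃ u i, u i = 1 ∧ (x = inl u ∧ y = inr i ∨ x = inr i ∧ y = inl u) := by
  rcases x with u | i <;> rcases y with v | j <;> simp only [colour] at h <;> (try split_ifs at h)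
  all_goals first | omega | exact ⟨_, _, by assumption, by simp⟩

theorem isRainbow_inl_add_single (u : Fin m → Fin 2) (i : Fin m) :
    IsRainbow (inl u) (inl (u + Pi.single i 1)) (inr i) :=
  isRainbow_inl_inl_inr.mpr ⟨hammingDist_add_single_self u i, by simp⟩

end Hypercube

section Construction

open Hypercube Sum

variable {m : ℕ}

def hypercubeVertexEquiv (m : ℕ) : Vertex m ≃ Fin (2 ^ m + m) :=
  (finFunctionFinEquiv.sumCongr (Equiv.refl (Fin m))).trans finSumFinEquiv

local notation "φ" => hypercubeVertexEquiv _

def hypercubeColouring (m : ℕ) : Sym2 (Fin (2 ^ m + m)) → ℕ :=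
  Sym2.lift ⟨fun a b => colour ((hypercubeVertexEquiv m).symm a) ((hypercubeVertexEquiv m).symm b),
    fun _ _ => colour_comm _ _⟩

@[simp] theorem hypercubeColouring_mk (x y : Vertex m) :
    hypercubeColouring m s(φ x, φ y) = colour x y := by
  simp [hypercubeColouring]

theorem hypercubeColouring_lt_three (e : Sym2 (Fin (2 ^ m + m))) : hypercubeColouring m e < 3 := by
  induction e using Sym2.ind with
  | _ a b =>
    obtain ⟨x, rfl⟩ := (hypercubeVertexEquiv m).surjective a
    obtain ⟨y, rfl⟩ := (hypercubeVertexEquiv m).surjective b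
    simpa using colour_lt_three x y

theorem isRainbowClique_hypercubeColouring_iff (x y z : Vertex m) :
    IsRainbowClique 3 (hypercubeColouring m) {φ x, φ y, φ z} ↔ IsRainbow x y z := by
  simp [isRainbowClique_three_iff, IsRainbow]

theorem almostGallai_hypercubeColouring : AlmostGallai 3 (hypercubeColouring m) := by
  refine almostGallai_three_of_apex_unique fun a b x y _ hx hy => ?_
  obtain ⟨a, rfl⟩ := (hypercubeVertexEquiv m).surjective a
  obtain ⟨b, rfl⟩ := (hypercubeVertexEquiv m).surjective b
  obtain ⟨x, rfl⟩ := (hypercubeVertexEquiv m).surjective x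
  obtain ⟨y, rfl⟩ := (hypercubeVertexEquiv m).surjective y
  rw [isRainbowClique_hypercubeColouring_iff] at hx hy
  rw [hx.apex_unique hy]

def hypercubeTriangle (i : Fin m) (u : Fin m → Fin 2) : Finset (Fin (2 ^ m + m)) :=
  {φ (inl u), φ (inl (u + Pi.single i 1)), φ (inr i)}

theorem isRainbowClique_hypercubeTriangle (i : Fin m) (u : Fin m → Fin 2) :
    IsRainbowClique 3 (hypercubeColouring m) (hypercubeTriangle i u) :=
  (isRainbowClique_hypercubeColouring_iff _ _ _).mpr (isRainbow_inl_add_single u i)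

theorem IsRainbowClique.exists_eq_hypercubeTriangle {S : Finset (Fin (2 ^ m + m))}
    (hS : IsRainbowClique 3 (hypercubeColouring m) S) :
    ∃ i u, u i = 1 ∧ S = hypercubeTriangle i u := by
  obtain ⟨a, ha, b, hb, hab⟩ :=
    hS.exists_edge_of_colour hypercubeColouring_lt_three (k := 1) (by norm_num)
  obtain ⟨x, rfl⟩ := (hypercubeVertexEquiv m).surjective a
  obtain ⟨y, rfl⟩ := (hypercubeVertexEquiv m).surjective b
  rw [hypercubeColouring_mk] at hab
  obtain ⟨u, i, hu, hxy⟩ := exists_of_colour_eq_one hab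
  have huS : φ (inl u) ∈ S ∧ φ (inr i) ∈ S := by
    rcases hxy with ⟨rfl, rfl⟩ | ⟨rfl, rfl⟩
    exacts [⟨ha, hb⟩, ⟨hb, ha⟩]
  refine ⟨i, u, hu, almostGallai_hypercubeColouring.eq_of_mem hS
    (isRainbowClique_hypercubeTriangle i u) (by simp) huS.1 huS.2 ?_ ?_⟩ <;>
    simp [hypercubeTriangle]

theorem hypercubeTriangle_injOn :
    Set.InjOn (fun p : (_ : Fin m) × (Fin m → Fin 2) => hypercubeTriangle p.1 p.2)
      {p | p.2 p.1 = 1} := by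
  rintro ⟨i, u⟩ hu ⟨j, v⟩ hv h
  change u i = 1 at hu
  change v j = 1 at hv
  simp only at h
  have hi : φ (inr i) ∈ hypercubeTriangle j v := h ▸ by simp [hypercubeTriangle]
  simp only [hypercubeTriangle, Finset.mem_insert, Finset.mem_singleton,
    EmbeddingLike.apply_eq_iff_eq, reduceCtorEq, inr.injEq, false_or] at hi
  subst hi
  have hu' : φ (inl u) ∈ hypercubeTriangle i v := h ▸ by simp [hypercubeTriangle]
  simp only [hypercubeTriangle, Finset.mem_insert, Finset.mem_singleton,
    EmbeddingLike.apply_eq_iff_eq, reduceCtorEq, inl.injEq, or_false] at hu'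
  rcases hu' with rfl | rfl
  · rfl
  · simp [hv] at hu

theorem rainbowCount_hypercubeColouring :
    rainbowCount 3 (hypercubeColouring m) = m * 2 ^ (m - 1) := by
  let D := Finset.univ.sigma fun i : Fin m => Finset.univ.filter fun u : Fin m → Fin 2 => u i = 1
  have hD : {S | IsRainbowClique 3 (hypercubeColouring m) S} =
      (fun p : (_ : Fin m) × (Fin m → Fin 2) => hypercubeTriangle p.1 p.2) '' D := by
    ext S
    constructor
    · intro hS
      obtain ⟨i, u, hu, rfl⟩ := IsRainbowClique.exists_eq_hypercubeTriangle hS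
      exact ⟨⟨i, u⟩, by simpa [D] using hu, rfl⟩
    · rintro ⟨⟨i, u⟩, -, rfl⟩
      exact isRainbowClique_hypercubeTriangle i u
  rw [rainbowCount, hD, Set.InjOn.ncard_image, Set.ncard_coe_finset, Finset.card_sigma]
  · simp [card_filter_apply_eq_one]
  · exact hypercubeTriangle_injOn.mono fun p hp => by simpa [D] using hp

end Construction

theorem tau_three_hypercube_construction (m : ℕ) :
    m * 2 ^ (m - 1) ≤ tau 3 (2 ^ m + m) ∧
    ∃ c : Sym2 (Fin (2 ^ m + m)) → ℕ, (∀ e, c e < 3) ∧ AlmostGallai 3 c ∧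
      rainbowCount 3 c = m * 2 ^ (m - 1) :=
  ⟨rainbowCount_hypercubeColouring (m := m) ▸ rainbowCount_le_tau almostGallai_hypercubeColouring,
    hypercubeColouring m, hypercubeColouring_lt_three, almostGallai_hypercubeColouring,
    rainbowCount_hypercubeColouring⟩
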